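/- (Single-action finite dependence; Corollary 1.) Let X be a finite nonempty set and D a finite set of actions with baseline 0, β ∈ ℝ, ρ ≥ 1. Let V, v, u, e, f be as above: V(x) = v(d, x) + e(d, x) and v(d, x) = u(d, x) + β Σ_{x'} f(x' | d, x) V(x') for all d, x. Let d*_1, …, d*_ρ : X → D be a sequence of decision rules, let F(d*_s) be the X×X matrix whose (x, x') entry is f(x' | d*_s(x), x), and let c(d*_s)(x) = u(d*_s(x), x) + e(d*_s(x), x). If f̃(· | d, x)ᵀ F(d*_1) ⋯ F(d*_ρ) = 0 for all d ∈ D, x ∈ X, where f̃(· | d, x) = f(· | d, x) − f(· | 0, x), then for all d, x: v(d, x) − v(0, x) = u(d, x) − u(0, x) + Σ_{τ=1}^{ρ} β^τ f̃(· | d, x)ᵀ ( F(d*_1) ⋯ F(d*_{τ−1}) ) c(d*_τ), where the empty product is the identity matrix. -/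

import Mathlib

open Matrix

/-- The one-step transition matrix induced by a decision rule `d* : X → D`, with row
`x` equal to `f(· | d*(x), x)`. -/
noncomputable def ruleTransMatrix {X D : Type*} [Fintype X]
    (f : D → X → X → ℝ) (dstar : X → D) : Matrix X X ℝ :=
  Matrix.of fun x x' => f (dstar x) x x'

/-- The partial products `F(d*₁) ⋯ F(d*_k)` of decision-rule transition matrices; the
empty product (`k = 0`) is the identity matrix. -/
noncomputable def prodRuleTransMatrix {X D : Type*} [Fintype X] [DecidableEq X]
    (f : D → X → X → ℝ) (ds : ℕ → X → D) : ℕ → Matrix X X ℝ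
  | 0 => 1
  | (k + 1) => prodRuleTransMatrix f ds k * ruleTransMatrix f (ds (k + 1))

/- Since `V = c(d*) + β F(d*) V` for every decision rule `d*`, pairing `V` with the weight
`f̃ᵀ F(d*₁) ⋯ F(d*_τ)` and substituting this identity for `d* = d*_{τ+1}` yields one period of
payoff `c(d*_{τ+1})` plus `β` times the pairing with the next weight. Iterating ρ times, the
remaining weight `f̃ᵀ F(d*₁) ⋯ F(d*_ρ)` vanishes by finite dependence. -/

/-- The paper's `c(d*)`. -/
def ruleFlowPayoff {X D : Type*} (u e : D → X → ℝ) (dstar : X → D) : X → ℝ :=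
  fun x => u (dstar x) x + e (dstar x) x

section

variable {X D : Type*} [Fintype X] {V : X → ℝ} {v u e : D → X → ℝ} {f : D → X → X → ℝ}
  {β : ℝ}

theorem eq_ruleFlowPayoff_add_smul_mulVec (hAM : ∀ d x, V x = v d x + e d x)
    (hBellman : ∀ d x, v d x = u d x + β * ∑ x', f d x x' * V x') (dstar : X → D) :
    V = ruleFlowPayoff u e dstar + β • (ruleTransMatrix f dstar *ᵥ V) := by
  funext x
  simp only [Pi.add_apply, Pi.smul_apply, smul_eq_mul, ruleFlowPayoff, mulVec, dotProduct,
    ruleTransMatrix, of_apply]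
  rw [hAM (dstar x) x, hBellman]
  ring

theorem value_sub_eq_flow_sub_add_smul_dotProduct
    (hBellman : ∀ d x, v d x = u d x + β * ∑ x', f d x x' * V x') (d d₀ : D) (x : X) :
    v d x - v d₀ x = u d x - u d₀ x + β * ((fun x₁ => f d x x₁ - f d₀ x x₁) ⬝ᵥ V) := by
  simp only [hBellman, dotProduct, sub_mul, Finset.sum_sub_distrib]
  ring

theorem dotProduct_eq_dotProduct_ruleFlowPayoff_add {dstar : X → D}
    (hV : V = ruleFlowPayoff u e dstar + β • (ruleTransMatrix f dstar *ᵥ V)) (w : X → ℝ) :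
    w ⬝ᵥ V = w ⬝ᵥ ruleFlowPayoff u e dstar + β * ((w ᵥ* ruleTransMatrix f dstar) ⬝ᵥ V) := by
  conv_lhs => rw [hV]
  rw [dotProduct_add, dotProduct_smul, dotProduct_mulVec, smul_eq_mul]

variable [DecidableEq X]

theorem vecMul_prodRuleTransMatrix_succ (ds : ℕ → X → D) (w : X → ℝ) (k : ℕ) :
    w ᵥ* prodRuleTransMatrix f ds (k + 1) =
      w ᵥ* prodRuleTransMatrix f ds k ᵥ* ruleTransMatrix f (ds (k + 1)) := by
  rw [prodRuleTransMatrix, vecMul_vecMul]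

theorem dotProduct_eq_sum_add_pow_mul_dotProduct {ds : ℕ → X → D}
    (hV : ∀ dstar : X → D, V = ruleFlowPayoff u e dstar + β • (ruleTransMatrix f dstar *ᵥ V))
    (n : ℕ) (w : X → ℝ) :
    w ⬝ᵥ V = ∑ τ ∈ Finset.range n,
        β ^ τ * ((w ᵥ* prodRuleTransMatrix f ds τ) ⬝ᵥ ruleFlowPayoff u e (ds (τ + 1)))
      + β ^ n * ((w ᵥ* prodRuleTransMatrix f ds n) ⬝ᵥ V) := by
  induction n with
  | zero => simp [prodRuleTransMatrix]
  | succ n ih =>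
    rw [ih, dotProduct_eq_dotProduct_ruleFlowPayoff_add (hV (ds (n + 1))),
      ← vecMul_prodRuleTransMatrix_succ, Finset.sum_range_succ]
    ring

end

theorem single_action_finite_dependence_general
    {X D : Type*} [Fintype X] [DecidableEq X]
    (d₀ : D) (β : ℝ) (ρ : ℕ)
    (V : X → ℝ) (v : D → X → ℝ) (u : D → X → ℝ) (e : D → X → ℝ)
    (f : D → X → X → ℝ)
    (hAM : ∀ (d : D) (x : X), V x = v d x + e d x)
    (hBellman : ∀ (d : D) (x : X),
      v d x = u d x + β * ∑ x' : X, f d x x' * V x')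
    (ds : ℕ → X → D)
    (hdep : ∀ (d : D) (x : X),
      (fun x₁ => f d x x₁ - f d₀ x x₁) ᵥ* prodRuleTransMatrix f ds ρ = 0) :
    ∀ (d : D) (x : X),
      v d x - v d₀ x = (u d x - u d₀ x)
        + ∑ τ ∈ Finset.range ρ, β ^ (τ + 1) *
            ∑ x' : X,
              ((fun x₁ => f d x x₁ - f d₀ x x₁) ᵥ* prodRuleTransMatrix f ds τ) x' *
                (u (ds (τ + 1) x') x' + e (ds (τ + 1) x') x') := by
  intro d x
  have hV := eq_ruleFlowPayoff_add_smul_mulVec hAM hBellman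
  rw [value_sub_eq_flow_sub_add_smul_dotProduct hBellman,
    dotProduct_eq_sum_add_pow_mul_dotProduct hV ρ, hdep d x, zero_dotProduct, mul_zero, add_zero,
    Finset.mul_sum]
  congr 1
  refine Finset.sum_congr rfl fun τ _ => ?_
  simp only [dotProduct, ruleFlowPayoff, pow_succ']
  ring

/-- Single-action finite dependence (Corollary 1): if following the sequence of
decision rules `d*₁, …, d*_ρ` kills the one-step transition differences relative to
the baseline action `d₀`, then the value differences are expressed by ρ periods of
payoffs `c(d*_s)(x) = u(d*_s(x), x) + e(d*_s(x), x)` along those rules. -/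
theorem single_action_finite_dependence
    {X D : Type*} [Fintype X] [DecidableEq X] [Nonempty X] [Fintype D]
    (d₀ : D) (β : ℝ) (ρ : ℕ) (hρ : 1 ≤ ρ)
    (V : X → ℝ) (v : D → X → ℝ) (u : D → X → ℝ) (e : D → X → ℝ)
    (f : D → X → X → ℝ)
    (hAM : ∀ (d : D) (x : X), V x = v d x + e d x)
    (hBellman : ∀ (d : D) (x : X),
      v d x = u d x + β * ∑ x' : X, f d x x' * V x')
    (ds : ℕ → X → D)
    (hdep : ∀ (d : D) (x : X),
      (fun x₁ => f d x x₁ - f d₀ x x₁) ᵥ* prodRuleTransMatrix f ds ρ = 0) :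
    ∀ (d : D) (x : X),
      v d x - v d₀ x = (u d x - u d₀ x)
        + ∑ τ ∈ Finset.range ρ, β ^ (τ + 1) *
            ∑ x' : X,
              ((fun x₁ => f d x x₁ - f d₀ x x₁) ᵥ* prodRuleTransMatrix f ds τ) x' *
                (u (ds (τ + 1) x') x' + e (ds (τ + 1) x') x') :=
  single_action_finite_dependence_general d₀ β ρ V v u e f hAM hBellman ds hdep
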